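/- arXiv:1412.7103 — 2 statements merged into one kernel-verified Lean document; each statement's English description precedes it below -/
import Mathlib

section
/- Let γ > 1 and let φ, ψ : ℝ → ℂ be integrable functions whose Fourier transforms satisfy |Fψ(u)| ≤ C |u|^γ / (1+|u|)^{2γ} for all u ∈ ℝ. For j < l and k, m ∈ ℤ define ψ_{j,k}(x) = 2^{j/2} ψ(2^j x − k). Then |⟨ψ_{l,m}, ψ_{j,k}′⟩| ≤ C′ 2^{l − (l−j)(γ − 1/2)} for a constant C′ depending only on C and γ, where ψ_{j,k}′ denotes the derivative. -/
/-!
By Plancherel, `⟨ψ_{l,m}, ψ_{j,k}'⟩ = ∫ 𝓕ψ_{l,m} · conj (2πiξ 𝓕ψ_{j,k})`, and dilation turns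
`|𝓕ψ_{j,k}(ξ)|` into `2^{-j/2} |𝓕ψ(2^{-j}ξ)|`. Bound the fine-scale factor by the full profile
`C |u|^γ / (1+|u|)^{2γ}` at `u = 2^{-l}ξ` and the coarse-scale factor only by its tail
`C |u|^{-γ}` at `u = 2^{-j}ξ`: the powers of `|ξ|` cancel up to the ratio `2^{(j-l)γ}`, and the
substitution `ξ = 2^l v` leaves the integral `∫ |v| (1+|v|)^{-2γ} dv`, finite because `γ > 1`.
-/

open Real Complex MeasureTheory

open FourierTransform ComplexConjugate

section RpowBounds

variable {x γ : ℝ}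

theorem rpow_div_one_add_rpow_le_rpow_neg (hx : 0 ≤ x) (hγ : 0 ≤ γ) :
    x ^ γ / (1 + x) ^ (2 * γ) ≤ x ^ (-γ) := by
  rcases hx.eq_or_lt with rfl | hx
  · rcases hγ.eq_or_lt with rfl | hγ
    · simp
    · simp [zero_rpow hγ.ne', zero_rpow (neg_ne_zero.mpr hγ.ne')]
  · have hsplit : x ^ (-γ) = x ^ γ / x ^ (2 * γ) := by
      rw [← rpow_sub hx]; ring_nf
    rw [hsplit]
    gcongr
    linarith

theorem rpow_div_one_add_rpow_le_one_add_rpow_neg (hx : 0 ≤ x) (hγ : 0 ≤ γ) :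
    x ^ γ / (1 + x) ^ (2 * γ) ≤ (1 + x) ^ (-γ) := by
  have hsplit : (1 + x) ^ (-γ) = (1 + x) ^ γ / (1 + x) ^ (2 * γ) := by
    rw [← rpow_sub (by linarith)]; ring_nf
  rw [hsplit]
  gcongr
  linarith

theorem div_rpow_mul_div_rpow_neg_le {t a b : ℝ} (ht : 0 ≤ t) (ha : 0 < a) (hb : 0 < b) :
    (t / a) ^ γ * (t / b) ^ (-γ) ≤ (b / a) ^ γ := by
  rcases ht.eq_or_lt with rfl | ht
  · rcases eq_or_ne γ 0 with rfl | hγ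
    · simp
    · simp [zero_rpow hγ, (rpow_pos_of_pos (div_pos hb ha) γ).le]
  · rw [rpow_neg (by positivity), ← div_eq_mul_inv, ← div_rpow (by positivity) (by positivity)]
    field_simp
    rfl

end RpowBounds

section FourierAnalysis

variable {V : Type*} [NormedAddCommGroup V] [InnerProductSpace ℝ V] [FiniteDimensional ℝ V]
  [MeasurableSpace V] [BorelSpace V]

theorem MeasureTheory.Integrable.continuous_fourier {E : Type*} [NormedAddCommGroup E]
    [NormedSpace ℂ E] {f : V → E} (hf : Integrable f) : Continuous (𝓕 f) :=
  VectorFourier.fourierIntegral_continuous Real.continuous_fourierChar (innerSL ℝ).continuous₂ hf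

theorem integral_mul_conj_eq_integral_fourier_mul_conj {f g : V → ℂ} (hfc : Continuous f)
    (hf : Integrable f) (hFf : Integrable (𝓕 f)) (hg : Integrable g) :
    ∫ v, f v * conj (g v) = ∫ ξ, 𝓕 f ξ * conj (𝓕 g ξ) := by
  have h := VectorFourier.integral_sesq_fourierIntegral_eq_neg_flip (innerSL ℂ (E := ℂ))
    Real.continuous_fourierChar (L := innerₗ V) (μ := volume) (ν := volume)
    (innerSL ℝ).continuous₂ hg hFf
  rw [flip_innerₗ] at h
  change ∫ ξ, innerSL ℂ (𝓕 g ξ) (𝓕 f ξ) = ∫ v, innerSL ℂ (g v) (𝓕⁻ (𝓕 f) v) at h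
  simpa only [innerSL_apply_apply, RCLike.inner_apply, mul_comm (conj _),
    hfc.fourierInv_fourier_eq hf hFf] using h.symm

end FourierAnalysis

section RealFourier

variable {E : Type*} [NormedAddCommGroup E] [NormedSpace ℂ E]

theorem Real.fourier_const_mul (r : ℂ) (f : ℝ → ℂ) (w : ℝ) :
    𝓕 (fun x ↦ r * f x) w = r * 𝓕 f w :=
  congrFun (VectorFourier.fourierIntegral_const_smul _ _ _ f r) w

theorem Real.fourier_comp_mul_left (f : ℝ → E) {b : ℝ} (hb : b ≠ 0) (w : ℝ) :
    𝓕 (fun x ↦ f (b * x)) w = |b|⁻¹ • 𝓕 f (w / b) := by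
  simp only [Real.fourier_real_eq]
  have key : ∀ x, 𝐞 (-(x * w)) • f (b * x) = 𝐞 (-(b * x * (w / b))) • f (b * x) := fun x ↦ by
    rw [mul_comm b x, mul_assoc, mul_div_cancel₀ _ hb]
  simp_rw [key]
  rw [Measure.integral_comp_mul_left (fun y ↦ 𝐞 (-(y * (w / b))) • f y), abs_inv]

theorem Real.norm_fourier_comp_add_right (f : ℝ → E) (c w : ℝ) :
    ‖𝓕 (fun x ↦ f (x + c)) w‖ = ‖𝓕 f w‖ := by
  have h := congrFun (VectorFourier.fourierIntegral_comp_add_right 𝐞 volume (innerₗ ℝ) f c) w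
  exact (congrArg (‖·‖) h).trans (Circle.norm_smul _ _)

theorem Real.norm_fourier_comp_mul_add (f : ℝ → E) {b : ℝ} (hb : b ≠ 0) (c w : ℝ) :
    ‖𝓕 (fun x ↦ f (b * x + c)) w‖ = |b|⁻¹ * ‖𝓕 f (w / b)‖ := by
  rw [Real.fourier_comp_mul_left (fun y ↦ f (y + c)) hb, norm_smul, norm_inv, norm_abs_eq_norm,
    Real.norm_fourier_comp_add_right, Real.norm_eq_abs]

theorem HasCompactSupport.norm_fourier_deriv {f : ℝ → E} (hf : ContDiff ℝ 1 f)
    (hfs : HasCompactSupport f) (ξ : ℝ) :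
    ‖𝓕 (deriv f) ξ‖ = 2 * π * |ξ| * ‖𝓕 f ξ‖ := by
  rw [Real.fourier_deriv (hf.continuous.integrable_of_hasCompactSupport hfs)
    (hf.differentiable one_ne_zero)
    ((hf.continuous_deriv le_rfl).integrable_of_hasCompactSupport hfs.deriv), norm_smul]
  simp [abs_of_pos pi_pos]

theorem Real.integrable_fourier_of_norm_le {f : ℝ → E} (hf : Integrable f) {C γ : ℝ}
    (hC : 0 ≤ C) (hγ : 1 < γ) (hdecay : ∀ u, ‖𝓕 f u‖ ≤ C * |u| ^ γ / (1 + |u|) ^ (2 * γ)) :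
    Integrable (𝓕 f) := by
  refine ((integrable_one_add_norm (by simpa using hγ)).const_mul C).mono'
    hf.continuous_fourier.aestronglyMeasurable (Filter.Eventually.of_forall fun u ↦ ?_)
  calc ‖𝓕 f u‖ ≤ C * (|u| ^ γ / (1 + |u|) ^ (2 * γ)) := by rw [← mul_div_assoc]; exact hdecay u
    _ ≤ C * (1 + ‖u‖) ^ (-γ) := by
      rw [Real.norm_eq_abs]
      gcongr
      exact rpow_div_one_add_rpow_le_one_add_rpow_neg (abs_nonneg u) (by linarith)

end RealFourier

theorem integrable_abs_mul_one_add_abs_rpow_neg {s : ℝ} (hs : 2 < s) :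
    Integrable fun v : ℝ ↦ |v| * (1 + |v|) ^ (-s) := by
  have hdom : Integrable fun v : ℝ ↦ (1 + ‖v‖) ^ (-(s - 1)) :=
    integrable_one_add_norm (by simp; linarith)
  refine hdom.mono' (by fun_prop) (Filter.Eventually.of_forall fun v ↦ ?_)
  have hv : 0 < 1 + |v| := by positivity
  rw [Real.norm_of_nonneg (by positivity), Real.norm_eq_abs, neg_sub,
    show 1 - s = 1 + -s by ring, rpow_add hv, rpow_one]
  gcongr
  linarith

theorem two_zpow_mul_div_rpow_eq (j l : ℤ) (γ : ℝ) :
    (2 : ℝ) ^ l * ((2 : ℝ) ^ j / 2 ^ l) ^ γ / (2 ^ ((l : ℝ) / 2) * 2 ^ ((j : ℝ) / 2)) * 2 ^ l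
      = 2 ^ ((l : ℝ) - ((l : ℝ) - j) * (γ - 1 / 2)) := by
  simp only [← rpow_intCast]
  rw [← rpow_sub two_pos, ← rpow_mul zero_le_two, ← rpow_add two_pos, ← rpow_add two_pos,
    ← rpow_sub two_pos, ← rpow_add two_pos]
  ring_nf

noncomputable def dyadicWavelet (ψ : ℝ → ℂ) (j k : ℤ) (x : ℝ) : ℂ :=
  ((2 : ℝ) ^ ((j : ℝ) / 2) : ℝ) * ψ ((2 : ℝ) ^ j * x - k)

namespace dyadicWavelet

variable {ψ : ℝ → ℂ}

theorem contDiff {n : WithTop ℕ∞} (hψ : ContDiff ℝ n ψ) (j k : ℤ) :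
    ContDiff ℝ n (dyadicWavelet ψ j k) := by
  unfold dyadicWavelet; fun_prop

theorem hasCompactSupport (hψ : HasCompactSupport ψ) (j k : ℤ) :
    HasCompactSupport (dyadicWavelet ψ j k) :=
  HasCompactSupport.mul_left (f := fun _ ↦ _)
    (hψ.comp_homeomorph ((Homeomorph.mulLeft₀ _ (zpow_ne_zero j two_ne_zero)).trans
      (Homeomorph.subRight (k : ℝ))))

theorem integrable (hψ : Integrable ψ) (j k : ℤ) : Integrable (dyadicWavelet ψ j k) :=
  ((hψ.comp_sub_right (k : ℝ)).comp_mul_left' (zpow_ne_zero j two_ne_zero)).const_mul _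

theorem norm_fourier (ψ : ℝ → ℂ) (j k : ℤ) (ξ : ℝ) :
    ‖𝓕 (dyadicWavelet ψ j k) ξ‖ = ‖𝓕 ψ (ξ / 2 ^ j)‖ / 2 ^ ((j : ℝ) / 2) := by
  have h2j : (0 : ℝ) < 2 ^ j := zpow_pos two_pos j
  have hsq : ((2 : ℝ) ^ j) = 2 ^ ((j : ℝ) / 2) * 2 ^ ((j : ℝ) / 2) := by
    rw [← rpow_add two_pos, add_halves, rpow_intCast]
  unfold dyadicWavelet
  simp_rw [sub_eq_add_neg]
  rw [Real.fourier_const_mul, norm_mul, Real.norm_fourier_comp_mul_add ψ h2j.ne',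
    abs_of_pos h2j, norm_real, Real.norm_of_nonneg (rpow_nonneg zero_le_two _), hsq]
  have := (rpow_pos_of_pos two_pos ((j : ℝ) / 2)).ne'
  field_simp

theorem integrable_fourier (hψ : Integrable ψ) (hFψ : Integrable (𝓕 ψ)) (j k : ℤ) :
    Integrable (𝓕 (dyadicWavelet ψ j k)) :=
  ((hFψ.comp_div (zpow_ne_zero j two_ne_zero)).norm.div_const _).mono'
    (integrable hψ j k).continuous_fourier.aestronglyMeasurable
    (Filter.Eventually.of_forall fun ξ ↦ (norm_fourier ψ j k ξ).le)

theorem norm_fourier_mul_norm_fourier_deriv_le (hψ : ContDiff ℝ 1 ψ)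
    (hψs : HasCompactSupport ψ) {C γ : ℝ} (hC : 0 ≤ C) (hγ : 0 ≤ γ)
    (hdecay : ∀ u, ‖𝓕 ψ u‖ ≤ C * |u| ^ γ / (1 + |u|) ^ (2 * γ)) (j l k m : ℤ) (ξ : ℝ) :
    ‖𝓕 (dyadicWavelet ψ l m) ξ‖ * ‖𝓕 (deriv (dyadicWavelet ψ j k)) ξ‖ ≤
      2 * π * C ^ 2 * 2 ^ l * ((2 : ℝ) ^ j / 2 ^ l) ^ γ / (2 ^ ((l : ℝ) / 2) * 2 ^ ((j : ℝ) / 2)) *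
        (|ξ / 2 ^ l| * (1 + |ξ / 2 ^ l|) ^ (-(2 * γ))) := by
  set a : ℝ := 2 ^ l
  set b : ℝ := 2 ^ j
  have ha : 0 < a := zpow_pos two_pos l
  have hb : 0 < b := zpow_pos two_pos j
  set x := |ξ / a|
  set R := (1 + x) ^ (-(2 * γ))
  have hx : |ξ| = a * x := by simp only [x, abs_div, abs_of_pos ha]; field_simp
  have hdecay_a : ‖𝓕 ψ (ξ / a)‖ ≤ C * (x ^ γ * R) := by
    simp only [R]
    rw [rpow_neg (by positivity), ← div_eq_mul_inv, ← mul_div_assoc]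
    exact hdecay _
  have hdecay_b : ‖𝓕 ψ (ξ / b)‖ ≤ C * |ξ / b| ^ (-γ) :=
    (hdecay _).trans <| by
      rw [mul_div_assoc]
      gcongr
      exact rpow_div_one_add_rpow_le_rpow_neg (abs_nonneg _) hγ
  have hscale : x ^ γ * |ξ / b| ^ (-γ) ≤ (b / a) ^ γ := by
    simpa only [x, abs_div, abs_of_pos ha, abs_of_pos hb] using
      div_rpow_mul_div_rpow_neg_le (γ := γ) (abs_nonneg ξ) ha hb
  rw [norm_fourier, (hasCompactSupport hψs j k).norm_fourier_deriv (contDiff hψ j k), norm_fourier]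
  calc ‖𝓕 ψ (ξ / a)‖ / 2 ^ ((l : ℝ) / 2) * (2 * π * |ξ| * (‖𝓕 ψ (ξ / b)‖ / 2 ^ ((j : ℝ) / 2)))
      ≤ C * (x ^ γ * R) / 2 ^ ((l : ℝ) / 2) *
          (2 * π * |ξ| * (C * |ξ / b| ^ (-γ) / 2 ^ ((j : ℝ) / 2))) := by
        gcongr
    _ = 2 * π * C ^ 2 * a / (2 ^ ((l : ℝ) / 2) * 2 ^ ((j : ℝ) / 2)) * (x * R) *
          (x ^ γ * |ξ / b| ^ (-γ)) := by
        rw [hx]; ring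
    _ ≤ 2 * π * C ^ 2 * a / (2 ^ ((l : ℝ) / 2) * 2 ^ ((j : ℝ) / 2)) * (x * R) * (b / a) ^ γ := by
        gcongr
    _ = _ := by ring

theorem norm_integral_mul_conj_deriv_le (hψ : ContDiff ℝ 1 ψ) (hψs : HasCompactSupport ψ)
    {C γ : ℝ} (hC : 0 ≤ C) (hγ : 1 < γ)
    (hdecay : ∀ u, ‖𝓕 ψ u‖ ≤ C * |u| ^ γ / (1 + |u|) ^ (2 * γ)) (j l k m : ℤ) :
    ‖∫ x, dyadicWavelet ψ l m x * conj (deriv (dyadicWavelet ψ j k) x)‖ ≤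
      2 * π * C ^ 2 * (∫ v : ℝ, |v| * (1 + |v|) ^ (-(2 * γ))) *
        2 ^ ((l : ℝ) - ((l : ℝ) - j) * (γ - 1 / 2)) := by
  have hψi : Integrable ψ := hψ.continuous.integrable_of_hasCompactSupport hψs
  have hFψ : Integrable (𝓕 ψ) := Real.integrable_fourier_of_norm_le hψi hC hγ hdecay
  have hderiv : Integrable (deriv (dyadicWavelet ψ j k)) :=
    ((contDiff hψ j k).continuous_deriv le_rfl).integrable_of_hasCompactSupport
      (hasCompactSupport hψs j k).deriv
  have hkernel := integrable_abs_mul_one_add_abs_rpow_neg (s := 2 * γ) (by linarith)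
  have ha : (0 : ℝ) < 2 ^ l := zpow_pos two_pos l
  set K := 2 * π * C ^ 2 * 2 ^ l * ((2 : ℝ) ^ j / 2 ^ l) ^ γ /
    (2 ^ ((l : ℝ) / 2) * 2 ^ ((j : ℝ) / 2))
  rw [integral_mul_conj_eq_integral_fourier_mul_conj (contDiff hψ l m).continuous
    (integrable hψi l m) (integrable_fourier hψi hFψ l m) hderiv]
  calc ‖∫ ξ, 𝓕 (dyadicWavelet ψ l m) ξ * conj (𝓕 (deriv (dyadicWavelet ψ j k)) ξ)‖
      ≤ ∫ ξ, ‖𝓕 (dyadicWavelet ψ l m) ξ‖ * ‖𝓕 (deriv (dyadicWavelet ψ j k)) ξ‖ :=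
        (norm_integral_le_integral_norm _).trans_eq (by simp only [norm_mul, RCLike.norm_conj])
    _ ≤ ∫ ξ : ℝ, K * (|ξ / 2 ^ l| * (1 + |ξ / 2 ^ l|) ^ (-(2 * γ))) :=
        integral_mono_of_nonneg (Filter.Eventually.of_forall fun _ ↦ by positivity)
          ((hkernel.comp_div ha.ne').const_mul K) (Filter.Eventually.of_forall
            (norm_fourier_mul_norm_fourier_deriv_le hψ hψs hC (by linarith) hdecay j l k m))
    _ = K * 2 ^ l * ∫ v : ℝ, |v| * (1 + |v|) ^ (-(2 * γ)) := by
        rw [integral_const_mul, Measure.integral_comp_div (fun v ↦ |v| * (1 + |v|) ^ (-(2 * γ))),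
          abs_of_pos ha, smul_eq_mul, mul_assoc]
    _ = _ := by rw [← two_zpow_mul_div_rpow_eq j l γ]; ring

end dyadicWavelet

/-- wavelet cross-coefficient bound from Fourier decay: if
`|Fψ(u)| ≤ C |u|^γ/(1+|u|)^{2γ}` with `γ > 1`, then for `j < l`,
`|⟨ψ_{l,m}, ψ_{j,k}'⟩| ≤ C' 2^{l-(l-j)(γ-1/2)}` with `C'` depending only on `C` and `γ`. -/
theorem stmt6 (C γ : ℝ) (hγ : 1 < γ) (hC : 0 < C) :
    ∃ C' : ℝ, 0 < C' ∧
      ∀ ψ : ℝ → ℂ, ContDiff ℝ 1 ψ → HasCompactSupport ψ →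
        (∀ u : ℝ, ‖FourierTransform.fourier ψ u‖ ≤ C * |u| ^ γ / (1 + |u|) ^ (2 * γ)) →
        ∀ j l k m : ℤ, j < l →
          ‖∫ x : ℝ, (((2:ℝ) ^ ((l : ℝ) / 2) : ℝ) : ℂ) * ψ ((2:ℝ) ^ l * x - (m : ℝ)) *
              (starRingEnd ℂ)
                (deriv (fun y : ℝ =>
                  (((2:ℝ) ^ ((j : ℝ) / 2) : ℝ) : ℂ) * ψ ((2:ℝ) ^ j * y - (k : ℝ))) x)‖
            ≤ C' * 2 ^ ((l : ℝ) - ((l : ℝ) - (j : ℝ)) * (γ - 1 / 2)) := by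
  set B := ∫ v : ℝ, |v| * (1 + |v|) ^ (-(2 * γ))
  refine ⟨2 * π * C ^ 2 * B + 1, by positivity, fun ψ hψ hψs hdecay j l k m _ ↦ ?_⟩
  refine (dyadicWavelet.norm_integral_mul_conj_deriv_le hψ hψs hC.le hγ hdecay j l k m).trans ?_
  gcongr
  linarith
end

section
/- Let μ : ℝ → ℝ be continuously differentiable and bounded below by some c > 0 on an interval D, with bounded derivative on D. Let ψ be a C¹ function supported in [−Γ, Γ] for some Γ > 0, and define ψ_{l,m}(x) = 2^{l/2}ψ(2^l x − m). Then for any j ≤ l, k, m ∈ ℤ with supp ψ_{l,m} ⊆ D, |⟨ψ_{l,m}, ψ_{j,k}′ / μ⟩| ≤ ‖1/μ‖_{L∞(D)} |⟨ψ_{l,m}, ψ_{j,k}′⟩| + 2^{−l+j} Γ ‖(1/μ)′‖_{L∞(D)} ‖ψ‖_{L²} ‖ψ′‖_{L²}. -/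
/-!
On the support of `ψ_{l,m}`, an interval of radius `2^{-l} Γ` around `x₀ = m 2^{-l}` lying in `D`,
the mean value theorem gives `|1/μ x - 1/μ x₀| ≤ 2^{-l} Γ ‖(1/μ)'‖_∞`. Splitting
`1/μ = 1/μ x₀ + (1/μ - 1/μ x₀)` therefore bounds the error term by this constant times
`∫ |ψ_{l,m} ψ_{j,k}'|`, and Cauchy–Schwarz with the scaling laws `‖ψ_{l,m}‖₂ = ‖ψ‖₂`,
`‖ψ_{j,k}'‖₂ = 2^j ‖ψ'‖₂` finishes the proof.
-/

open MeasureTheory Set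

theorem integral_abs_mul_le_sqrt_mul_sqrt {α : Type*} [MeasurableSpace α] {ν : Measure α}
    {f g : α → ℝ} (hf : MemLp f 2 ν) (hg : MemLp g 2 ν) :
    ∫ x, |f x * g x| ∂ν ≤ √(∫ x, f x ^ 2 ∂ν) * √(∫ x, g x ^ 2 ∂ν) := by
  have h2 : ENNReal.ofReal 2 = 2 := by norm_num
  have holder := integral_mul_norm_le_Lp_mul_Lq Real.HolderConjugate.two_two
    (h2 ▸ hf) (h2 ▸ hg)
  simpa only [Real.norm_eq_abs, Real.rpow_two, sq_abs, ← abs_mul, ← Real.sqrt_eq_rpow] using holder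

theorem integral_comp_mul_sub_of_pos (h : ℝ → ℝ) {r : ℝ} (hr : 0 < r) (b : ℝ) :
    ∫ x, h (r * x - b) = r⁻¹ * ∫ x, h x := by
  rw [Measure.integral_comp_mul_left (fun y => h (y - b)), integral_sub_right_eq_self h b,
    smul_eq_mul, abs_of_pos (inv_pos.2 hr)]

theorem sqrt_integral_sq_const_mul_comp_mul_sub (h : ℝ → ℝ) (a : ℝ) {r : ℝ} (hr : 0 < r)
    (b : ℝ) : √(∫ x, (a * h (r * x - b)) ^ 2) = |a| / √r * √(∫ x, h x ^ 2) := by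
  simp_rw [mul_pow, integral_const_mul, integral_comp_mul_sub_of_pos (fun y => h y ^ 2) hr b]
  rw [Real.sqrt_mul (sq_nonneg a), Real.sqrt_sq_eq_abs, Real.sqrt_mul (inv_pos.2 hr).le,
    Real.sqrt_inv, div_eq_mul_inv, mul_assoc]

theorem sqrt_two_zpow (n : ℤ) : √((2 : ℝ) ^ n) = 2 ^ ((n : ℝ) / 2) := by
  rw [Real.sqrt_eq_rpow, ← Real.rpow_intCast, ← Real.rpow_mul zero_le_two]
  ring_nf

theorem abs_sub_le_of_comp_mul_sub_ne_zero {h : ℝ → ℝ} {Γ : ℝ}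
    (hh : ∀ y, h y ≠ 0 → y ∈ Icc (-Γ) Γ) {r : ℝ} (hr : 0 < r) {b x : ℝ}
    (hx : h (r * x - b) ≠ 0) : |x - b * r⁻¹| ≤ Γ * r⁻¹ := by
  have hrx : |r * x - b| ≤ Γ := abs_le.2 (hh _ hx)
  calc |x - b * r⁻¹| = |r * x - b| * r⁻¹ := by
        rw [← abs_of_pos (inv_pos.2 hr), ← abs_mul, abs_of_pos (inv_pos.2 hr)]
        congr 1; field_simp
    _ ≤ Γ * r⁻¹ := by gcongr

theorem HasCompactSupport.const_mul_comp_mul_sub {h : ℝ → ℝ} (hh : HasCompactSupport h) (a : ℝ)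
    {r : ℝ} (hr : r ≠ 0) (b : ℝ) : HasCompactSupport fun x => a * h (r * x - b) :=
  (hh.comp_homeomorph ((Homeomorph.mulLeft₀ r hr).trans (Homeomorph.subRight b))).mul_left

theorem integral_abs_wavelet_mul_le {ψ θ : ℝ → ℝ} (hψ : Continuous ψ) (hψs : HasCompactSupport ψ)
    (hθ : Continuous θ) (hθs : HasCompactSupport θ) (j l k m : ℤ) :
    ∫ x, |2 ^ ((l : ℝ) / 2) * ψ (2 ^ l * x - m) * (2 ^ ((j : ℝ) / 2) * 2 ^ j * θ (2 ^ j * x - k))|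
      ≤ √(∫ x, ψ x ^ 2) * (2 ^ j * √(∫ x, θ x ^ 2)) := by
  have h2l : (0 : ℝ) < 2 ^ l := by positivity
  have h2j : (0 : ℝ) < 2 ^ j := by positivity
  have hCS := integral_abs_mul_le_sqrt_mul_sqrt
    ((by fun_prop : Continuous _).memLp_of_hasCompactSupport (μ := volume)
      (hψs.const_mul_comp_mul_sub (2 ^ ((l : ℝ) / 2)) h2l.ne' m))
    ((by fun_prop : Continuous _).memLp_of_hasCompactSupport (μ := volume)
      (hθs.const_mul_comp_mul_sub (2 ^ ((j : ℝ) / 2) * 2 ^ j) h2j.ne' k))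
  rwa [sqrt_integral_sq_const_mul_comp_mul_sub ψ _ h2l,
    sqrt_integral_sq_const_mul_comp_mul_sub θ _ h2j, sqrt_two_zpow, sqrt_two_zpow,
    abs_of_pos (by positivity), abs_of_pos (by positivity), div_self (by positivity),
    mul_div_cancel_left₀ _ (by positivity), one_mul] at hCS

theorem abs_le_iSup_abs {X : Type*} [TopologicalSpace X] {s : Set X} (hs : IsCompact s)
    {f : X → ℝ} (hf : ContinuousOn f s) {x : X} (hx : x ∈ s) : |f x| ≤ ⨆ y : s, |f y| := by
  refine le_ciSup (f := fun y : s => |f y|) ?_ ⟨x, hx⟩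
  have hbdd := (hs.image_of_continuousOn hf.abs).bddAbove
  rwa [image_eq_range] at hbdd

theorem abs_sub_le_iSup_abs_deriv_mul {f : ℝ → ℝ} {s : Set ℝ} (hs : Convex ℝ s)
    (hsc : IsCompact s) (hf : ∀ x ∈ s, DifferentiableAt ℝ f x) (hf' : ContinuousOn (deriv f) s)
    {x y : ℝ} (hx : x ∈ s) (hy : y ∈ s) : |f x - f y| ≤ (⨆ z : s, |deriv f z|) * |x - y| :=
  hs.norm_image_sub_le_of_norm_deriv_le hf (fun _ hz => abs_le_iSup_abs hsc hf' hz) hy hx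

theorem abs_integral_mul_le_of_abs_sub_le {α : Type*} [MeasurableSpace α] {ν : Measure α}
    {F g : α → ℝ} {x₀ : α} {K : ℝ} (hF : Integrable F ν)
    (hFg : Integrable (fun x => F x * g x) ν) (hg : ∀ x, F x ≠ 0 → |g x - g x₀| ≤ K) :
    |∫ x, F x * g x ∂ν| ≤ |g x₀| * |∫ x, F x ∂ν| + K * ∫ x, |F x| ∂ν := by
  have hsplit : ∫ x, F x * g x ∂ν = g x₀ * ∫ x, F x ∂ν + ∫ x, F x * (g x - g x₀) ∂ν := by
    simp_rw [mul_sub]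
    rw [integral_sub hFg (hF.mul_const _), integral_mul_const]
    ring
  have hrem : ∫ x, |F x * (g x - g x₀)| ∂ν ≤ ∫ x, K * |F x| ∂ν := by
    refine integral_mono_of_nonneg (.of_forall fun x => abs_nonneg _) (hF.abs.const_mul K)
      (.of_forall fun x => ?_)
    by_cases hx : F x = 0
    · simp [hx]
    · dsimp only
      rw [abs_mul, mul_comm]
      exact mul_le_mul_of_nonneg_right (hg x hx) (abs_nonneg _)
  calc |∫ x, F x * g x ∂ν|
      ≤ |g x₀ * ∫ x, F x ∂ν| + |∫ x, F x * (g x - g x₀) ∂ν| := hsplit ▸ abs_add_le _ _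
    _ ≤ |g x₀| * |∫ x, F x ∂ν| + K * ∫ x, |F x| ∂ν := by
      rw [abs_mul, ← integral_const_mul]
      gcongr
      exact (abs_integral_le_integral_abs).trans hrem

theorem continuousOn_deriv_one_div {μ μ' : ℝ → ℝ} {s : Set ℝ} (hμ : ∀ x, HasDerivAt μ (μ' x) x)
    (hμ' : Continuous μ') (hμ0 : ∀ x ∈ s, μ x ≠ 0) :
    ContinuousOn (deriv fun y => 1 / μ y) s := by
  have hμc : Continuous μ := continuous_iff_continuousAt.2 fun x => (hμ x).continuousAt
  have h : ContinuousOn (fun x => -1 * μ' x / μ x ^ 2) s :=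
    (continuous_const.mul hμ').continuousOn.div (hμc.pow 2).continuousOn
      fun x hx => pow_ne_zero 2 (hμ0 x hx)
  refine h.congr fun x hx => ?_
  rw [deriv_const_div 1 (hμ x).differentiableAt (hμ0 x hx), (hμ x).deriv]

theorem abs_integral_div_le {s : Set ℝ} (hs : Convex ℝ s) (hsc : IsCompact s) {μ μ' : ℝ → ℝ}
    (hμ : ∀ x, HasDerivAt μ (μ' x) x) (hμ' : Continuous μ') (hμ0 : ∀ x ∈ s, μ x ≠ 0)
    {F : ℝ → ℝ} (hF : Integrable F) {x₀ B : ℝ} (hB : 0 ≤ B) (hBs : Icc (x₀ - B) (x₀ + B) ⊆ s)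
    (hFs : ∀ x, F x ≠ 0 → |x - x₀| ≤ B) :
    |∫ x, F x / μ x| ≤ (⨆ x : s, |1 / μ x|) * |∫ x, F x|
      + (⨆ x : s, |deriv (fun y => 1 / μ y) x|) * B * ∫ x, |F x| := by
  have hx₀ : x₀ ∈ s := hBs (mem_Icc_iff_abs_le.1 (by rwa [sub_self, abs_zero]))
  have hFs' : ∀ x, F x ≠ 0 → x ∈ s := fun x hx =>
    hBs (mem_Icc_iff_abs_le.1 (abs_sub_comm x x₀ ▸ hFs x hx))
  have hμc : Continuous μ := continuous_iff_continuousAt.2 fun x => (hμ x).continuousAt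
  have hinv : ContinuousOn (fun y => 1 / μ y) s := continuousOn_const.div hμc.continuousOn hμ0
  have hinv_diff : ∀ x ∈ s, DifferentiableAt ℝ (fun y => 1 / μ y) x := fun x hx =>
    (differentiableAt_const _).div (hμ x).differentiableAt (hμ0 x hx)
  have hinv_deriv := continuousOn_deriv_one_div hμ hμ' hμ0
  have hFinv : Integrable (fun x => F x * (1 / μ x)) := by
    refine hF.norm.mul_const (⨆ x : s, |1 / μ x|) |>.mono'
      (hF.aestronglyMeasurable.mul (hμc.measurable.const_div 1).aestronglyMeasurable)
      (.of_forall fun x => ?_)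
    by_cases hx : F x = 0
    · simp [hx]
    · rw [norm_mul, Real.norm_eq_abs, Real.norm_eq_abs]
      exact mul_le_mul_of_nonneg_left (abs_le_iSup_abs hsc hinv (hFs' x hx)) (abs_nonneg _)
  have hLip : ∀ x, F x ≠ 0 → |1 / μ x - 1 / μ x₀|
      ≤ (⨆ x : s, |deriv (fun y => 1 / μ y) x|) * B := fun x hx =>
    (abs_sub_le_iSup_abs_deriv_mul hs hsc hinv_diff hinv_deriv (hFs' x hx) hx₀).trans <|
      mul_le_mul_of_nonneg_left (hFs x hx) (Real.iSup_nonneg fun _ => abs_nonneg _)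
  simp_rw [div_eq_mul_one_div (F _)]
  refine (abs_integral_mul_le_of_abs_sub_le hF hFinv hLip).trans ?_
  gcongr
  exact abs_le_iSup_abs hsc hinv hx₀

theorem stmt7_general (d1 d2 Γ c : ℝ) (hΓ : 0 < Γ) (hc : 0 < c)
    (μ μ' ψ ψ' : ℝ → ℝ)
    (hμ : ∀ x, HasDerivAt μ (μ' x) x) (hμ'c : Continuous μ')
    (hμpos : ∀ x ∈ Set.Icc d1 d2, c ≤ μ x)
    (hψ : ∀ x, HasDerivAt ψ (ψ' x) x) (hψ'c : Continuous ψ')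
    (hsupp : ∀ x : ℝ, ψ x ≠ 0 → x ∈ Set.Icc (-Γ) Γ)
    (j l k m : ℤ)
    (hwindow : Set.Icc (((m : ℝ) - Γ) * (2:ℝ) ^ (-l)) (((m : ℝ) + Γ) * (2:ℝ) ^ (-l))
        ⊆ Set.Icc d1 d2) :
    |∫ x : ℝ, ((2:ℝ) ^ ((l : ℝ) / 2) * ψ ((2:ℝ) ^ l * x - (m : ℝ))) *
        ((2:ℝ) ^ ((j : ℝ) / 2) * (2:ℝ) ^ j * ψ' ((2:ℝ) ^ j * x - (k : ℝ))) / μ x|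
      ≤ (⨆ x : Set.Icc d1 d2, |1 / μ x.1|) *
          |∫ x : ℝ, ((2:ℝ) ^ ((l : ℝ) / 2) * ψ ((2:ℝ) ^ l * x - (m : ℝ))) *
            ((2:ℝ) ^ ((j : ℝ) / 2) * (2:ℝ) ^ j * ψ' ((2:ℝ) ^ j * x - (k : ℝ)))|
        + 2 ^ (-(l : ℝ) + (j : ℝ)) * Γ *
            (⨆ x : Set.Icc d1 d2, |deriv (fun y => 1 / μ y) x.1|) *
            Real.sqrt (∫ x : ℝ, ψ x ^ 2) * Real.sqrt (∫ x : ℝ, ψ' x ^ 2) := by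
  have hψc : Continuous ψ := continuous_iff_continuousAt.2 fun x => (hψ x).continuousAt
  have hψcs : HasCompactSupport ψ :=
    .intro isCompact_Icc fun x hx => not_imp_comm.1 (hsupp x) hx
  have hψ'cs : HasCompactSupport ψ' := funext (fun x => (hψ x).deriv) ▸ hψcs.deriv
  have h2l : (0 : ℝ) < 2 ^ l := by positivity
  have hF : Integrable fun x => 2 ^ ((l : ℝ) / 2) * ψ (2 ^ l * x - m) *
      (2 ^ ((j : ℝ) / 2) * 2 ^ j * ψ' (2 ^ j * x - k)) :=
    (by fun_prop : Continuous _).integrable_of_hasCompactSupport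
      (hψcs.const_mul_comp_mul_sub _ h2l.ne' m).mul_right
  rw [sub_mul, add_mul, zpow_neg] at hwindow
  refine (abs_integral_div_le (convex_Icc d1 d2) isCompact_Icc hμ hμ'c
    (fun x hx => (hc.trans_le (hμpos x hx)).ne') hF (by positivity) hwindow
    fun x hx => abs_sub_le_of_comp_mul_sub_ne_zero hsupp h2l
      (right_ne_zero_of_mul (left_ne_zero_of_mul hx))).trans ?_
  refine add_le_add le_rfl ?_
  calc _ ≤ (⨆ x : Icc d1 d2, |deriv (fun y => 1 / μ y) x|) * (Γ * (2 ^ l)⁻¹) *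
        (√(∫ x, ψ x ^ 2) * (2 ^ j * √(∫ x, ψ' x ^ 2))) := by
          gcongr
          · exact mul_nonneg (Real.iSup_nonneg fun _ => abs_nonneg _) (by positivity)
          · exact integral_abs_wavelet_mul_le hψc hψcs hψ'c hψ'cs j l k m
    _ = _ := by
      rw [Real.rpow_add two_pos, Real.rpow_neg zero_le_two, Real.rpow_intCast, Real.rpow_intCast]
      ring

/-- Taylor-expansion bound for the wavelet coefficient against `ψ_{j,k}'/μ`:
`|⟨ψ_{l,m}, ψ_{j,k}'/μ⟩| ≤ ‖1/μ‖_{L∞(D)} |⟨ψ_{l,m}, ψ_{j,k}'⟩|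
    + 2^{-l+j} Γ ‖(1/μ)'‖_{L∞(D)} ‖ψ‖_{L²} ‖ψ'‖_{L²}`. -/
theorem stmt7 (d1 d2 Γ c : ℝ) (hD : d1 < d2) (hΓ : 0 < Γ) (hc : 0 < c)
    (μ μ' ψ ψ' : ℝ → ℝ)
    (hμ : ∀ x, HasDerivAt μ (μ' x) x) (hμ'c : Continuous μ')
    (hμpos : ∀ x ∈ Set.Icc d1 d2, c ≤ μ x)
    (hψ : ∀ x, HasDerivAt ψ (ψ' x) x) (hψ'c : Continuous ψ')
    (hsupp : ∀ x : ℝ, ψ x ≠ 0 → x ∈ Set.Icc (-Γ) Γ)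
    (j l k m : ℤ) (hjl : j ≤ l)
    (hwindow : Set.Icc (((m : ℝ) - Γ) * (2:ℝ) ^ (-l)) (((m : ℝ) + Γ) * (2:ℝ) ^ (-l))
        ⊆ Set.Icc d1 d2) :
    |∫ x : ℝ, ((2:ℝ) ^ ((l : ℝ) / 2) * ψ ((2:ℝ) ^ l * x - (m : ℝ))) *
        ((2:ℝ) ^ ((j : ℝ) / 2) * (2:ℝ) ^ j * ψ' ((2:ℝ) ^ j * x - (k : ℝ))) / μ x|
      ≤ (⨆ x : Set.Icc d1 d2, |1 / μ x.1|) *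
          |∫ x : ℝ, ((2:ℝ) ^ ((l : ℝ) / 2) * ψ ((2:ℝ) ^ l * x - (m : ℝ))) *
            ((2:ℝ) ^ ((j : ℝ) / 2) * (2:ℝ) ^ j * ψ' ((2:ℝ) ^ j * x - (k : ℝ)))|
        + 2 ^ (-(l : ℝ) + (j : ℝ)) * Γ *
            (⨆ x : Set.Icc d1 d2, |deriv (fun y => 1 / μ y) x.1|) *
            Real.sqrt (∫ x : ℝ, ψ x ^ 2) * Real.sqrt (∫ x : ℝ, ψ' x ^ 2) :=
  stmt7_general d1 d2 Γ c hΓ hc μ μ' ψ ψ' hμ hμ'c hμpos hψ hψ'c hsupp j l k m hwindow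
end
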